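/- arXiv:0811.0070 — 4 statements merged into one kernel-verified Lean document; each statement's English description precedes it below -/
import Mathlib

section
/- Let F be a nontrivial finite group that is not perfect (i.e., [F,F] ≠ F). Then the direct power F^ℕ (functions ℕ → F with pointwise multiplication) has countable cofinality: it is the union of a strictly increasing countable chain of proper subgroups. -/
/-!
A non-perfect finite group `F` maps onto a nontrivial elementary abelian `p`-group `Q`
(its abelianization modulo `p`-th powers), so `F^ℕ` maps onto `Q^ℕ`, an infinite-dimensional
`𝔽_p`-vector space, and chains of subgroups pull back along surjections. Given a basis of a
vector space containing distinct vectors `e₀, e₁, …`, the spans `Wₙ` of all basis vectors except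
`eₙ, eₙ₊₁, …` form a strictly increasing chain of proper subspaces, and every vector lies in
some `Wₙ` because it involves only finitely many basis vectors.
-/

open Set Function

@[to_additive]
def Group.HasCountableCofinality (G : Type*) [Group G] : Prop :=
  ∃ H : ℕ → Subgroup G, StrictMono H ∧ (∀ n, H n ≠ ⊤) ∧ ∀ g : G, ∃ n, g ∈ H n

theorem Set.exists_strictMono_chain_of_infinite (ι : Type*) [Infinite ι] :
    ∃ S : ℕ → Set ι, StrictMono S ∧ (∀ n, S n ≠ univ) ∧ ∀ s : Set ι, s.Finite → ∃ n, s ⊆ S n := by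
  let e : ℕ ↪ ι := _root_.Infinite.natEmbedding ι
  have he_notMem (n : ℕ) : e n ∉ (e '' Ici n)ᶜ := fun h => h ⟨n, self_mem_Ici, rfl⟩
  refine ⟨fun n => (e '' Ici n)ᶜ, strictMono_nat_of_lt_succ fun n => ?_,
    fun n h => he_notMem n (eq_univ_iff_forall.1 h _), fun s hs => ?_⟩
  · refine ssubset_iff_subset_ne.2
      ⟨compl_subset_compl.2 (image_mono (Ici_subset_Ici.2 n.le_succ)), fun h => he_notMem n (h ▸ ?_)⟩
    rintro ⟨k, hk, hkn⟩
    exact (Nat.succ_le_iff.1 hk).ne' (e.injective hkn)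
  · obtain ⟨N, hN⟩ := (hs.preimage e.injective.injOn).bddAbove
    refine ⟨N + 1, fun i hi ⟨k, hk, hki⟩ => ?_⟩
    have : k ≤ N := hN (show e k ∈ s from hki ▸ hi)
    exact absurd (mem_Ici.1 hk) (by omega)

theorem Module.Basis.span_image_strictMono {ι R M : Type*} [Semiring R] [Nontrivial R]
    [AddCommMonoid M] [Module R M] (b : Basis ι R M) :
    StrictMono fun s : Set ι => Submodule.span R (b '' s) :=
  strictMono_of_le_iff_le fun _ _ =>
    ⟨fun h => Submodule.span_mono (image_mono h),
      fun h _ hi => b.self_mem_span_image.1 (h (b.self_mem_span_image.2 hi))⟩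

theorem Module.hasCountableCofinality_of_not_finite (K : Type*) {V : Type*} [DivisionRing K]
    [AddCommGroup V] [Module K V] (hV : ¬ Module.Finite K V) :
    AddGroup.HasCountableCofinality V := by
  let b := Basis.ofVectorSpace K V
  have : Infinite (Basis.ofVectorSpaceIndex K V) :=
    not_finite_iff_infinite.1 fun _ => hV (Module.Finite.of_basis b)
  obtain ⟨S, hS_mono, hS_ne, hS_cover⟩ :=
    exists_strictMono_chain_of_infinite (Basis.ofVectorSpaceIndex K V)
  refine ⟨fun n => (Submodule.span K (b '' S n)).toAddSubgroup,
    Submodule.toAddSubgroup_strictMono.comp (b.span_image_strictMono.comp hS_mono),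
    fun n h => hS_ne n (eq_univ_of_forall fun i =>
      b.self_mem_span_image.1 ((AddSubgroup.eq_top_iff' _).1 h (b i))), fun x => ?_⟩
  obtain ⟨n, hn⟩ := hS_cover _ (b.repr x).support.finite_toSet
  exact ⟨n, b.mem_span_image.2 hn⟩

theorem Group.HasCountableCofinality.of_additive {G : Type*} [Group G]
    (h : AddGroup.HasCountableCofinality (Additive G)) : Group.HasCountableCofinality G := by
  obtain ⟨H, hH_mono, hH_ne, hH_cover⟩ := h
  exact ⟨fun n => (H n).toSubgroup', AddSubgroup.toSubgroup'.strictMono.comp hH_mono,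
    fun n h => hH_ne n (AddSubgroup.toSubgroup'.injective (h.trans (map_top _).symm)),
    fun g => hH_cover (Additive.ofMul g)⟩

theorem Group.HasCountableCofinality.of_surjective {G H : Type*} [Group G] [Group H]
    (h : Group.HasCountableCofinality H) (f : G →* H) (hf : Surjective f) :
    Group.HasCountableCofinality G := by
  obtain ⟨K, hK_mono, hK_ne, hK_cover⟩ := h
  exact ⟨fun n => (K n).comap f,
    fun _ _ hmn => (Subgroup.comap_lt_comap_of_surjective hf).2 (hK_mono hmn),
    fun n h => hK_ne n (Subgroup.comap_injective hf (h.trans (Subgroup.comap_top f).symm)),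
    fun g => hK_cover (f g)⟩

theorem CommGroup.hasCountableCofinality_of_pow_eq_one {G : Type*} [CommGroup G] [Infinite G]
    (p : ℕ) [Fact p.Prime] (hG : ∀ g : G, g ^ p = 1) : Group.HasCountableCofinality G := by
  let _ : Module (ZMod p) (Additive G) := AddCommGroup.zmodModule fun x => hG x.toMul
  exact .of_additive <| Module.hasCountableCofinality_of_not_finite (ZMod p) <|
    Module.finite_iff_finite.not.2 (not_finite_iff_infinite.2 inferInstance)

theorem QuotientGroup.pow_eq_one_of_range_powMonoidHom {A : Type*} [CommGroup A] (n : ℕ)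
    (q : A ⧸ (powMonoidHom n : A →* A).range) : q ^ n = 1 := by
  induction q using QuotientGroup.induction_on with
  | H a => exact (QuotientGroup.eq_one_iff _).2 ⟨a, rfl⟩

theorem range_powMonoidHom_ne_top {A : Type*} [CommGroup A] [Finite A] {p : ℕ} (hp : p.Prime)
    (hdvd : p ∣ Nat.card A) : (powMonoidHom p : A →* A).range ≠ ⊤ := by
  have := Fact.mk hp
  obtain ⟨a, ha⟩ := exists_prime_orderOf_dvd_card' p hdvd
  have ha_ne : a ≠ 1 := fun h => hp.ne_one (by rw [← ha, h, orderOf_one])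
  have h_not_inj : ¬ Injective (powMonoidHom p : A →* A) := fun h =>
    ha_ne (h (show a ^ p = 1 ^ p by rw [one_pow, ← ha, pow_orderOf_eq_one]))
  rwa [Ne, MonoidHom.range_eq_top, ← Finite.injective_iff_surjective]

theorem stmt5_general {F : Type*} [Group F] [Finite F]
    (hnp : commutator F ≠ ⊤) :
    ∃ H : ℕ → Subgroup (ℕ → F), StrictMono H ∧ (∀ n, H n ≠ ⊤) ∧
      (∀ g : ℕ → F, ∃ n, g ∈ H n) := by
  have : Nontrivial (Abelianization F) := QuotientGroup.nontrivial_iff.2 hnp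
  obtain ⟨p, hp, hp_dvd⟩ :=
    Nat.exists_prime_and_dvd (Finite.one_lt_card (α := Abelianization F)).ne'
  have := Fact.mk hp
  let Q := Abelianization F ⧸ (powMonoidHom p : Abelianization F →* _).range
  have : Nontrivial Q := QuotientGroup.nontrivial_iff.2 (range_powMonoidHom_ne_top hp hp_dvd)
  let ψ : F →* Q := (QuotientGroup.mk' _).comp Abelianization.of
  have hψ : Surjective ψ := (QuotientGroup.mk'_surjective _).comp QuotientGroup.mk_surjective
  exact (CommGroup.hasCountableCofinality_of_pow_eq_one (G := ℕ → Q) p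
    fun g => funext fun n => QuotientGroup.pow_eq_one_of_range_powMonoidHom p (g n)).of_surjective
    (MonoidHom.compLeft ψ ℕ) hψ.comp_left

/-- Koppelberg–Tits, one direction: if `F` is a nontrivial finite
non-perfect group then `F^ℕ` has countable cofinality. -/
theorem stmt5 {F : Type*} [Group F] [Finite F] [Nontrivial F]
    (hnp : commutator F ≠ ⊤) :
    ∃ H : ℕ → Subgroup (ℕ → F), StrictMono H ∧ (∀ n, H n ≠ ⊤) ∧
      (∀ g : ℕ → F, ∃ n, g ∈ H n) :=
  stmt5_general hnp
end

section
/- Let L be a finite group with normal subgroups K ≤ N ≤ L (both normal in L) such that N/K is abelian. Then the number of commuting pairs satisfies |{(x,y) ∈ L × L : xy = yx}| ≥ |L|² / (|K| · |L:N|²). -/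
open scoped commutatorElement

/-! Counting pairs of `N × N` by their first entry and their commutator: for fixed `x`, two
elements `y, z` with `⁅x, y⁆ = ⁅x, z⁆` differ by an element `y⁻¹ * z` of the centralizer of `x`.
Hence `N × N` embeds into (commuting pairs) × `K`, so `|N|² ≤ |C| · |K|`, and
`|L| = |N| · |L : N|` gives the inequality. -/

theorem commute_inv_mul_of_commutatorElement_eq {G : Type*} [Group G] {x y z : G}
    (h : ⁅x, y⁆ = ⁅x, z⁆) : Commute x (y⁻¹ * z) := by
  rw [commutatorElement_def, commutatorElement_def] at h
  have hconj : y * x * y⁻¹ = z * x * z⁻¹ := by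
    simpa [mul_assoc] using congrArg (fun t => (x⁻¹ * t)⁻¹) h
  calc x * (y⁻¹ * z) = y⁻¹ * (y * x * y⁻¹) * z := by group
    _ = y⁻¹ * (z * x * z⁻¹) * z := by rw [hconj]
    _ = y⁻¹ * z * x := by group

theorem card_mul_card_le_card_commuting_mul_card {G : Type*} [Group G] [Finite G]
    (A B K : Set G) (h : ∀ a ∈ A, ∀ b ∈ B, ⁅a, b⁆ ∈ K) :
    Nat.card A * Nat.card B ≤ Nat.card {p : G × G | p.1 * p.2 = p.2 * p.1} * Nat.card K := by
  set r : G → G → G := fun a => Function.invFun fun y => ⁅a, y⁆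
  -- `r a k` is a chosen solution `y` of `⁅a, y⁆ = k`, whenever one exists.
  have hr (a b : G) : ⁅a, r a ⁅a, b⁆⁆ = ⁅a, b⁆ := Function.invFun_eq ⟨b, rfl⟩
  rw [← Nat.card_prod, ← Nat.card_prod]
  refine Nat.card_le_card_of_injective (fun p : A × B =>
    (⟨((p.1 : G), (r p.1 ⁅(p.1 : G), (p.2 : G)⁆)⁻¹ * p.2),
        commute_inv_mul_of_commutatorElement_eq (hr p.1 p.2)⟩,
      ⟨⁅(p.1 : G), (p.2 : G)⁆, h _ p.1.2 _ p.2.2⟩)) ?_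
  intro p q hpq
  obtain ⟨hpair, hcomm⟩ := Prod.mk.inj hpq
  have ha : (p.1 : G) = q.1 := congrArg (fun c => c.1.1) hpair
  have hb : (r p.1 ⁅(p.1 : G), (p.2 : G)⁆)⁻¹ * p.2 = (r q.1 ⁅(q.1 : G), (q.2 : G)⁆)⁻¹ * q.2 :=
    congrArg (fun c => c.1.2) hpair
  replace hcomm : ⁅(p.1 : G), (p.2 : G)⁆ = ⁅(q.1 : G), (q.2 : G)⁆ := congrArg Subtype.val hcomm
  rw [ha] at hcomm hb
  rw [hcomm] at hb
  exact Prod.ext (Subtype.ext ha) (Subtype.ext (mul_left_cancel hb))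

theorem stmt7_general {L : Type*} [Group L] [Finite L]
    (K N : Subgroup L)
    (hab : ∀ x ∈ N, ∀ y ∈ N, ⁅x, y⁆ ∈ K) :
    Nat.card L ^ 2 ≤
      Nat.card {p : L × L | p.1 * p.2 = p.2 * p.1} * (Nat.card K * N.index ^ 2) := by
  calc Nat.card L ^ 2 = Nat.card N * Nat.card N * N.index ^ 2 := by
        rw [← Subgroup.card_mul_index N]; ring
    _ ≤ Nat.card {p : L × L | p.1 * p.2 = p.2 * p.1} * Nat.card K * N.index ^ 2 :=
        Nat.mul_le_mul_right _ (card_mul_card_le_card_commuting_mul_card (N : Set L) N K hab)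
    _ = _ := by ring

/-- P. Neumann's inequality: if `K ≤ N` are normal subgroups of a
finite group `L` with `N/K` abelian, then
`|{commuting pairs}| ≥ |L|² / (|K|·|L:N|²)`. -/
theorem stmt7 {L : Type*} [Group L] [Finite L]
    (K N : Subgroup L) (hKN : K ≤ N) [K.Normal] [N.Normal]
    (hab : ∀ x ∈ N, ∀ y ∈ N, ⁅x, y⁆ ∈ K) :
    Nat.card L ^ 2 ≤
      Nat.card {p : L × L | p.1 * p.2 = p.2 * p.1} * (Nat.card K * N.index ^ 2) :=
  stmt7_general K N hab
end

section
/- Let L be a finite p-group of nilpotency class ≤ 2 with W = [L,L] elementary abelian and central, U = L/W elementary abelian, and let f: Λ²U → W be the linear map induced by the commutator. Suppose dim Ker(f) ≥ k · dim U for some k ∈ ℕ, and |L| = i. Then |W| ≤ p^{(log_p i)(log_p i − 1 − 2k)/2}, and consequently the number of commuting pairs in L satisfies |{(x,y) : xy=yx}| ≥ i² · p^{(log_p i)(2k + 1 − log_p i)/2}. -/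
/-!
In a finite group `G` each coset of `[G, G]` is a union of
conjugacy classes, so `G` has at least `|G| / |[G, G]|` conjugacy classes, and the number of
commuting pairs is the number of conjugacy classes times `|G|`. Writing `d = dim U`, `w = dim W`
and `n = d + w = log_p |L|`, the hypothesis `w + k d ≤ d(d - 1)/2` forces `w ≤ n(n - 1 - 2k)/2`,
which bounds `|W| = p^w`; Neumann's inequality then bounds the commuting pairs from below.
-/

theorem card_sq_le_card_commute_mul_card_commutator (G : Type*) [Group G] [Finite G] :
    Nat.card G ^ 2 ≤ Nat.card {p : G × G // Commute p.1 p.2} * Nat.card (commutator G) := by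
  have hG : (0 : ℚ) < Nat.card G ^ 2 := by have := Nat.card_pos (α := G); positivity
  have hC : (0 : ℚ) < Nat.card (commutator G) := by exact_mod_cast Nat.card_pos
  have h := inv_card_commutator_le_commProb G
  rw [commProb_def, inv_le_iff_one_le_mul₀ hC, div_mul_eq_mul_div, le_div_iff₀ hG, one_mul] at h
  exact_mod_cast h

theorem natCast_le_mul_sub_div_two_of_add_mul_le_choose_two (k d w : ℕ)
    (h : w + k * d ≤ d.choose 2) :
    (w : ℝ) ≤ (d + w : ℝ) * ((d + w : ℝ) - 1 - 2 * k) / 2 := by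
  have h' : (w : ℝ) + k * d ≤ d * (d - 1) / 2 := by
    rw [← Nat.cast_choose_two]
    exact_mod_cast h
  rcases Nat.eq_zero_or_pos w with rfl | hw
  · push_cast
    nlinarith
  · have hw : (1 : ℝ) ≤ w := by exact_mod_cast hw
    have hd : (0 : ℝ) ≤ d := Nat.cast_nonneg d
    have hgap : (0 : ℝ) < d - 1 - 2 * k := by nlinarith
    nlinarith [mul_nonneg (by linarith : (0 : ℝ) ≤ w) hgap.le]

theorem stmt16_general {L : Type*} [Group L] [Finite L] (p k dU dW i : ℕ) (hp : p.Prime)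
    (W : Subgroup L) (hW : W = commutator L)
    (hcardL : Nat.card L = i) (hcardW : Nat.card W = p ^ dW)
    (hker : dW + k * dU ≤ dU * (dU - 1) / 2) :
    (Nat.card W : ℝ) ≤
        (p : ℝ) ^ ((dU + dW : ℝ) * ((dU + dW : ℝ) - 1 - 2 * (k : ℝ)) / 2) ∧
      (i : ℝ) ^ 2 * (p : ℝ) ^ ((dU + dW : ℝ) * (2 * (k : ℝ) + 1 - (dU + dW : ℝ)) / 2) ≤
        (Nat.card {q : L × L | q.1 * q.2 = q.2 * q.1} : ℝ) := by
  have hp1 : (1 : ℝ) ≤ p := by exact_mod_cast hp.one_lt.le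
  have hdim := natCast_le_mul_sub_div_two_of_add_mul_le_choose_two k dU dW
    (by rwa [Nat.choose_two_right])
  have hcardW_le : (Nat.card W : ℝ) ≤
      (p : ℝ) ^ ((dU + dW : ℝ) * ((dU + dW : ℝ) - 1 - 2 * (k : ℝ)) / 2) := by
    rw [hcardW, Nat.cast_pow, ← Real.rpow_natCast]
    exact Real.rpow_le_rpow_of_exponent_le hp1 hdim
  refine ⟨hcardW_le, ?_⟩
  have hneumann : (i : ℝ) ^ 2 ≤
      Nat.card {q : L × L | q.1 * q.2 = q.2 * q.1} * Nat.card W := by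
    subst hW hcardL
    exact_mod_cast card_sq_le_card_commute_mul_card_commutator L
  rw [show (dU + dW : ℝ) * (2 * (k : ℝ) + 1 - (dU + dW : ℝ)) / 2
      = -((dU + dW : ℝ) * ((dU + dW : ℝ) - 1 - 2 * (k : ℝ)) / 2) by ring,
    Real.rpow_neg (by positivity), ← div_eq_mul_inv, div_le_iff₀ (by positivity)]
  exact hneumann.trans (by gcongr)

/-- for a finite `p`-group `L` of class `≤ 2` with `W = [L,L]`
central elementary abelian and `U = L/W` elementary abelian, if
`dim Ker f ≥ k·dim U` (equivalently, by the dimension formula of the commutator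
map `f : Λ²U → W`, `d_W + k·d_U ≤ d_U(d_U-1)/2`), then
`|W| ≤ p^{(log_p i)(log_p i - 1 - 2k)/2}` and the number of commuting pairs is
at least `i²·p^{(log_p i)(2k + 1 - log_p i)/2}` where `i = |L|`. -/
theorem stmt16 {L : Type*} [Group L] [Finite L] (p k dU dW i : ℕ) (hp : p.Prime)
    (W : Subgroup L) [W.Normal] (hW : W = commutator L)
    (hcentral : W ≤ Subgroup.center L)
    (helemW : ∀ w ∈ W, w ^ p = 1) (helemU : ∀ u : L ⧸ W, u ^ p = 1)
    (hcardL : Nat.card L = i) (hcardW : Nat.card W = p ^ dW)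
    (hcardU : Nat.card (L ⧸ W) = p ^ dU)
    (hker : dW + k * dU ≤ dU * (dU - 1) / 2) :
    (Nat.card W : ℝ) ≤
        (p : ℝ) ^ ((dU + dW : ℝ) * ((dU + dW : ℝ) - 1 - 2 * (k : ℝ)) / 2) ∧
      (i : ℝ) ^ 2 * (p : ℝ) ^ ((dU + dW : ℝ) * (2 * (k : ℝ) + 1 - (dU + dW : ℝ)) / 2) ≤
        (Nat.card {q : L × L | q.1 * q.2 = q.2 * q.1} : ℝ) :=
  stmt16_general p k dU dW i hp W hW hcardL hcardW hker
end

section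
/- Let G be a topological group and X a discrete G-set such that G embeds in Sym(X) via the action, and suppose K ≤ G is a subgroup whose closure in Sym(X) is compact, F = {f₁,…,f_k} ⊆ G is finite, g ∈ G, and K₀ := ⋂{hKh⁻¹ : h ∈ ⟨f₁,…,f_k,g⟩} has finite index in K. If G is locally finite, then K has finite index in K₁ := ⟨f₁,…,f_k, g, K⟩. -/
/-!
`K₀` is normalised by `H = ⟨f, g⟩`, and `K = T K₀` for a finite set `T ⊆ K` of coset
representatives. By local finiteness `F = ⟨f, g, T⟩` is finite. Every generator `s` of `F`
satisfies `K₀ s ∪ K₀ s⁻¹ ⊆ F K₀` (for `s ∈ H` since `s` normalises `K₀`, for `s ∈ T` since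
`K₀ s ⊆ K = T K₀`), hence `K₀ F ⊆ F K₀` and `F K₀` is a subgroup. It contains `K` and `H`, so
`K ⊔ H ⊆ F K` and the finitely many elements of `F` represent all cosets of `K` in `K ⊔ H`.
-/

open Pointwise

namespace Subgroup

variable {G : Type*} [Group G]

theorem exists_finite_subset_mul_of_relIndex_ne_zero {H K : Subgroup G} (h : H.relIndex K ≠ 0) :
    ∃ T : Set G, T.Finite ∧ T ⊆ K ∧ (K : Set G) ⊆ T * H := by
  have : Finite (K ⧸ H.subgroupOf K) := index_ne_zero_iff_finite.mp h
  refine ⟨Set.range fun q : K ⧸ H.subgroupOf K => ((q.out : K) : G), Set.finite_range _, ?_, ?_⟩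
  · rintro _ ⟨q, rfl⟩
    exact q.out.2
  · intro x hx
    let q : K ⧸ H.subgroupOf K := QuotientGroup.mk ⟨x, hx⟩
    have hq : (q.out : K ⧸ H.subgroupOf K) = QuotientGroup.mk ⟨x, hx⟩ := q.out_eq'
    exact ⟨q.out, ⟨q, rfl⟩, (q.out : G)⁻¹ * x, mem_subgroupOf.mp (QuotientGroup.eq.mp hq),
      mul_inv_cancel_left _ _⟩

theorem relIndex_ne_zero_of_subset_mul {H L : Subgroup G} {A : Set G} (hA : A.Finite)
    (hAL : A ⊆ L) (hLA : (L : Set G) ⊆ A * H) : H.relIndex L ≠ 0 := by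
  have : Finite A := hA.to_subtype
  refine index_ne_zero_iff_finite.mpr <| Finite.of_surjective
    (fun a : A => (QuotientGroup.mk ⟨a, hAL a.2⟩ : L ⧸ H.subgroupOf L)) ?_
  rintro ⟨x, hx⟩
  obtain ⟨a, ha, y, hy, rfl⟩ := hLA hx
  refine ⟨⟨a, ha⟩, QuotientGroup.eq.mpr ?_⟩
  simpa [mem_subgroupOf] using hy

theorem coe_mul_closure_subset_closure_mul {N : Subgroup G} {S : Set G}
    (hS : ∀ s ∈ S, ∀ z ∈ N,
      z * s ∈ (closure S : Set G) * N ∧ z * s⁻¹ ∈ (closure S : Set G) * N) :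
    (N : Set G) * closure S ⊆ closure S * N := by
  rintro _ ⟨z, hz, x, hx, rfl⟩
  induction hx using closure_induction'' generalizing z with
  | mem s hs => exact (hS s hs z hz).1
  | inv_mem s hs => exact (hS s hs z hz).2
  | one => exact ⟨1, one_mem _, z, hz, by simp⟩
  | mul x y _ _ ihx ihy =>
    obtain ⟨a, ha, n, hn, hxz⟩ := ihx z hz
    obtain ⟨b, hb, m, hm, hyn⟩ := ihy n hn
    refine ⟨a * b, mul_mem ha hb, m, hm, ?_⟩
    dsimp only at hxz hyn ⊢
    rw [mul_assoc, hyn, ← mul_assoc, hxz, mul_assoc]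

theorem coe_sup_eq_mul_of_mul_subset {A N : Subgroup G}
    (h : (N : Set G) * A ⊆ A * N) : ((A ⊔ N : Subgroup G) : Set G) = A * N := by
  rw [sup_eq_closure_mul]
  refine subset_closure.antisymm' fun x hx => ?_
  induction hx using closure_induction'' with
  | mem _ hx => exact hx
  | inv_mem x hx =>
    obtain ⟨a, ha, n, hn, rfl⟩ := hx
    simpa only [mul_inv_rev] using h (Set.mul_mem_mul (inv_mem hn) (inv_mem ha))
  | one => exact ⟨1, one_mem _, 1, one_mem _, mul_one 1⟩
  | mul _ _ _ _ hx hy =>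
    obtain ⟨a, ha, n, hn, rfl⟩ := hx
    obtain ⟨b, hb, m, hm, rfl⟩ := hy
    obtain ⟨c, hc, k, hk, hnb⟩ := h (Set.mul_mem_mul hn hb)
    refine ⟨a * c, mul_mem ha hc, k * m, mul_mem hk hm, ?_⟩
    dsimp only at hnb ⊢
    rw [mul_assoc, ← mul_assoc c, hnb, mul_assoc, mul_assoc]

theorem mem_iInf_conj_smul_iff {H K : Subgroup G} {x : G} :
    x ∈ ⨅ h ∈ (H : Set G), MulAut.conj h • K ↔ ∀ h ∈ H, h⁻¹ * x * h ∈ K := by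
  simp only [mem_iInf, mem_pointwise_smul_iff_inv_smul_mem, MulAut.smul_def,
    MulAut.conj_inv_apply, SetLike.mem_coe]

theorem iInf_conj_smul_le (H K : Subgroup G) : ⨅ h ∈ (H : Set G), MulAut.conj h • K ≤ K :=
  fun x hx => by simpa using mem_iInf_conj_smul_iff.mp hx 1 (one_mem H)

theorem le_normalizer_iInf_conj_smul (H K : Subgroup G) :
    H ≤ normalizer ((⨅ h ∈ (H : Set G), MulAut.conj h • K : Subgroup G) : Set G) := by
  intro h hh
  rw [mem_normalizer_iff'']
  intro x
  simp only [mem_iInf_conj_smul_iff]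
  refine ⟨fun hx h' hh' => ?_, fun hx h' hh' => ?_⟩
  · simpa only [mul_inv_rev, mul_assoc] using hx (h * h') (mul_mem hh hh')
  · simpa [mul_assoc] using hx (h⁻¹ * h') (mul_mem (inv_mem hh) hh')

theorem relIndex_sup_closure_ne_zero {K N : Subgroup G} {R : Set G}
    (hlf : ∀ S : Set G, S.Finite → (closure S : Set G).Finite) (hR : R.Finite)
    (hNK : N ≤ K) (hN : N.relIndex K ≠ 0) (hRN : R ⊆ normalizer (N : Set G)) :
    K.relIndex (K ⊔ closure R) ≠ 0 := by
  obtain ⟨T, hT, hTK, hKT⟩ := exists_finite_subset_mul_of_relIndex_ne_zero hN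
  set F := closure (R ∪ T)
  have hKF : (K : Set G) ⊆ F * N :=
    hKT.trans (Set.mul_subset_mul_right (subset_closure.trans' Set.subset_union_right))
  have hFN : ((F ⊔ N : Subgroup G) : Set G) = F * N := by
    refine coe_sup_eq_mul_of_mul_subset (coe_mul_closure_subset_closure_mul ?_)
    rintro s (hs | hs) z hz
    · have hsF : s ∈ F := subset_closure (Or.inl hs)
      exact ⟨⟨s, hsF, s⁻¹ * z * s, (mem_normalizer_iff''.mp (hRN hs) z).mp hz, by group⟩,
        ⟨s⁻¹, inv_mem hsF, s * z * s⁻¹, (mem_normalizer_iff.mp (hRN hs) z).mp hz, by group⟩⟩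
    · exact ⟨hKF (mul_mem (hNK hz) (hTK hs)), hKF (mul_mem (hNK hz) (inv_mem (hTK hs)))⟩
  have hKR : K ⊔ closure R ≤ F ⊔ N :=
    sup_le (fun k hk => by rw [← SetLike.mem_coe, hFN]; exact hKF hk)
      ((closure_mono Set.subset_union_left).trans le_sup_left)
  refine relIndex_ne_zero_of_subset_mul (hlf _ (hR.union hT)) (closure_le _ |>.mpr ?_) ?_
  · rintro s (hs | hs)
    · exact mem_sup_right (subset_closure hs)
    · exact mem_sup_left (hTK hs)
  · calc ((K ⊔ closure R : Subgroup G) : Set G) ⊆ (F ⊔ N : Subgroup G) := hKR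
      _ = F * N := hFN
      _ ⊆ F * K := Set.mul_subset_mul_left hNK

end Subgroup

theorem stmt19_general {G : Type*} [Group G]
    (hlf : ∀ S : Set G, S.Finite → ((Subgroup.closure S : Subgroup G) : Set G).Finite)
    (K : Subgroup G)
    (k : ℕ) (f : Fin k → G) (g : G)
    (K₀ : Subgroup G)
    (hK₀ : K₀ = ⨅ h ∈ ((Subgroup.closure (Set.range f ∪ {g}) : Subgroup G) : Set G),
      MulAut.conj h • K)
    (hfin : K₀.relIndex K ≠ 0) :
    K.relIndex (K ⊔ Subgroup.closure (Set.range f ∪ {g})) ≠ 0 := by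
  subst hK₀
  exact Subgroup.relIndex_sup_closure_ne_zero hlf
    ((Set.finite_range f).union (Set.finite_singleton g)) (Subgroup.iInf_conj_smul_le _ _) hfin
    fun r hr => Subgroup.le_normalizer_iInf_conj_smul _ _ (Subgroup.subset_closure hr)

/-- in a locally finite group `G` acting faithfully on a set `X`,
if `K₀ = ⋂ {hKh⁻¹ : h ∈ ⟨f₁,…,f_k,g⟩}` has finite index in `K`, then `K` has
finite index in `K₁ = ⟨f₁,…,f_k,g,K⟩`. -/
theorem stmt19 {G X : Type*} [Group G] [TopologicalSpace G] [IsTopologicalGroup G]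
    [MulAction G X] [FaithfulSMul G X]
    (hlf : ∀ S : Set G, S.Finite → ((Subgroup.closure S : Subgroup G) : Set G).Finite)
    (K : Subgroup G) (hKcomp : IsCompact (closure (K : Set G)))
    (k : ℕ) (f : Fin k → G) (g : G)
    (K₀ : Subgroup G)
    (hK₀ : K₀ = ⨅ h ∈ ((Subgroup.closure (Set.range f ∪ {g}) : Subgroup G) : Set G),
      MulAut.conj h • K)
    (hfin : K₀.relIndex K ≠ 0) :
    K.relIndex (K ⊔ Subgroup.closure (Set.range f ∪ {g})) ≠ 0 :=
  stmt19_general hlf K k f g K₀ hK₀ hfin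
end
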